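/- arXiv:1504.03744 — 3 statements merged into one kernel-verified Lean document; each statement's English description precedes it below -/
import Mathlib

section
/- Let r > 0 and let B_1, B_2 be two closed balls of radius r in the Euclidean plane ℝ² whose centers are at distance d apart, with 0 ≤ d ≤ 2r. Then the Lebesgue measure (area) of B_1 ∩ B_2 equals 2r²·arccos(d/(2r)) − (d/2)·√(4r² − d²). -/
/-!
An isometry moves the centres to `(0, 0)` and `(d, 0)`. By Fubini the area is then the integral
of the vertical chord length `2√(min (r² - x²) (r² - (x - d)²))`, which is symmetric about
`x = d / 2` and equals `2√(r² - x²)` for `x ≥ d / 2`. So the area is `4 ∫_{d/2}^r √(r² - x²) dx`,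
and `(x√(r² - x²) - r² arccos (x / r)) / 2` is an antiderivative of the integrand vanishing at `r`.
-/

open MeasureTheory Metric Real Set

theorem hasDerivAt_antideriv_sqrt_sq_sub_sq {r x : ℝ} (hx₁ : -r < x) (hx₂ : x < r) :
    HasDerivAt (fun t => (t * √(r ^ 2 - t ^ 2) - r ^ 2 * arccos (t / r)) / 2)
      (√(r ^ 2 - x ^ 2)) x := by
  have hr : 0 < r := by linarith
  have hpos : 0 < r ^ 2 - x ^ 2 := by nlinarith
  have hsq : √(r ^ 2 - x ^ 2) ^ 2 = r ^ 2 - x ^ 2 := sq_sqrt hpos.le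
  have hsqrt_one_sub : √(1 - (x / r) ^ 2) = √(r ^ 2 - x ^ 2) / r := by
    rw [show 1 - (x / r) ^ 2 = (r ^ 2 - x ^ 2) / r ^ 2 by field_simp,
      sqrt_div hpos.le, sqrt_sq hr.le]
  have hroot : HasDerivAt (fun t => √(r ^ 2 - t ^ 2)) (-(2 * x) / (2 * √(r ^ 2 - x ^ 2))) x := by
    simpa using ((hasDerivAt_pow 2 x).const_sub (r ^ 2)).sqrt hpos.ne'
  have harccos : HasDerivAt (fun t => arccos (t / r)) (-(1 / √(1 - (x / r) ^ 2)) * (1 / r)) x :=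
    (hasDerivAt_arccos (by rw [ne_eq, div_eq_iff hr.ne']; linarith)
      (by rw [ne_eq, div_eq_iff hr.ne']; linarith)).comp x ((hasDerivAt_id x).div_const r)
  refine (((hasDerivAt_id x).mul hroot).sub (harccos.const_mul (r ^ 2))).div_const 2
    |>.congr_deriv ?_
  rw [hsqrt_one_sub, id]
  field_simp
  linear_combination -hsq

theorem integral_sqrt_sq_sub_sq {r a : ℝ} (hr : 0 < r) (ha : -r ≤ a) (har : a ≤ r) :
    ∫ x in a..r, √(r ^ 2 - x ^ 2) = (r ^ 2 * arccos (a / r) - a * √(r ^ 2 - a ^ 2)) / 2 := by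
  rw [intervalIntegral.integral_eq_sub_of_hasDeriv_right_of_le har (by fun_prop)
    (fun x hx => (hasDerivAt_antideriv_sqrt_sq_sub_sq (by linarith [hx.1]) hx.2).hasDerivWithinAt)
    ((by fun_prop : Continuous _).intervalIntegrable _ _)]
  simp only [sub_self, sqrt_zero, mul_zero, div_self hr.ne', arccos_one, zero_div, zero_sub]
  ring

theorem volume_setOf_sq_le (m : ℝ) : volume {y : ℝ | y ^ 2 ≤ m} = ENNReal.ofReal (2 * √m) := by
  rcases le_or_gt 0 m with hm | hm
  · have : {y : ℝ | y ^ 2 ≤ m} = Icc (-√m) √m := by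
      ext y
      rw [mem_ofPred_eq, mem_Icc, ← abs_le, ← sqrt_le_sqrt_iff hm, sqrt_sq_eq_abs]
    rw [this, volume_Icc]
    ring_nf
  · have : {y : ℝ | y ^ 2 ≤ m} = ∅ := eq_empty_of_forall_notMem fun y hy => by
      nlinarith [sq_nonneg y, mem_ofPred_eq ▸ hy]
    simp [this, sqrt_eq_zero_of_nonpos hm.le]

def lens (r d : ℝ) : Set (ℝ × ℝ) :=
  {p | p.1 ^ 2 + p.2 ^ 2 ≤ r ^ 2 ∧ (p.1 - d) ^ 2 + p.2 ^ 2 ≤ r ^ 2}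

/-- Outside `[d - r, r]` the radicand is negative and `Real.sqrt` returns `0`, so this is the
length of the vertical chord of `lens r d` at abscissa `x` for every `x`. -/
noncomputable def lensWidth (r d x : ℝ) : ℝ := 2 * √(min (r ^ 2 - x ^ 2) (r ^ 2 - (x - d) ^ 2))

section lensWidth

variable {r d : ℝ}

theorem continuous_lensWidth : Continuous (lensWidth r d) := by
  unfold lensWidth; fun_prop

theorem lensWidth_nonneg (x : ℝ) : 0 ≤ lensWidth r d x := by
  unfold lensWidth; positivity

theorem lensWidth_sub_left (x : ℝ) : lensWidth r d (d - x) = lensWidth r d x := by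
  unfold lensWidth; rw [min_comm]; ring_nf

theorem lensWidth_eq_zero_of_notMem (hr : 0 ≤ r) {x : ℝ} (hx : x ∉ Icc (d - r) r) :
    lensWidth r d x = 0 := by
  rw [lensWidth, mul_eq_zero, sqrt_eq_zero']
  right
  rcases not_and_or.mp hx with hx | hx <;> push Not at hx
  · exact (min_le_right _ _).trans (by nlinarith)
  · exact (min_le_left _ _).trans (by nlinarith)

theorem lensWidth_of_half_le (hd : 0 ≤ d) {x : ℝ} (hx : d / 2 ≤ x) :
    lensWidth r d x = 2 * √(r ^ 2 - x ^ 2) := by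
  rw [lensWidth, min_eq_left (by nlinarith)]

theorem integrable_lensWidth (hr : 0 ≤ r) : Integrable (lensWidth r d) :=
  continuous_lensWidth.integrable_of_hasCompactSupport <|
    HasCompactSupport.intro isCompact_Icc fun _ => lensWidth_eq_zero_of_notMem hr

theorem integral_lensWidth (hr : 0 < r) (hd₀ : 0 ≤ d) (hd : d ≤ 2 * r) :
    ∫ x, lensWidth r d x = 2 * r ^ 2 * arccos (d / (2 * r)) - d / 2 * √(4 * r ^ 2 - d ^ 2) := by
  have hint : ∀ a b : ℝ, IntervalIntegrable (lensWidth r d) volume a b :=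
    continuous_lensWidth.intervalIntegrable
  have support : ∫ x, lensWidth r d x = ∫ x in d - r..r, lensWidth r d x := by
    rw [intervalIntegral.integral_of_le (by linarith), ← integral_Icc_eq_integral_Ioc,
      setIntegral_eq_integral_of_forall_compl_eq_zero fun _ => lensWidth_eq_zero_of_notMem hr.le]
  have reflect : ∫ x in d - r..d / 2, lensWidth r d x = ∫ x in d / 2..r, lensWidth r d x := by
    simpa [lensWidth_sub_left, show d - d / 2 = d / 2 by ring] using
      (intervalIntegral.integral_comp_sub_left (a := d / 2) (b := r) (lensWidth r d) d).symm
  have half : ∫ x in d / 2..r, lensWidth r d x = 2 * ∫ x in d / 2..r, √(r ^ 2 - x ^ 2) := by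
    rw [← intervalIntegral.integral_const_mul]
    refine intervalIntegral.integral_congr fun x hx => lensWidth_of_half_le hd₀ ?_
    exact (uIcc_of_le (by linarith : d / 2 ≤ r) ▸ hx).1
  have hroot : √(4 * r ^ 2 - d ^ 2) = 2 * √(r ^ 2 - (d / 2) ^ 2) := by
    rw [show 4 * r ^ 2 - d ^ 2 = 2 ^ 2 * (r ^ 2 - (d / 2) ^ 2) by ring, sqrt_mul (by norm_num),
      sqrt_sq zero_le_two]
  rw [support, ← intervalIntegral.integral_add_adjacent_intervals (hint _ (d / 2)) (hint _ _),
    reflect, half, integral_sqrt_sq_sub_sq hr (by linarith) (by linarith), hroot, div_div]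
  ring

end lensWidth

theorem preimage_mk_lens (r d x : ℝ) :
    Prod.mk x ⁻¹' lens r d = {y | y ^ 2 ≤ min (r ^ 2 - x ^ 2) (r ^ 2 - (x - d) ^ 2)} := by
  ext y
  simp only [lens, mem_preimage, mem_ofPred_eq, le_min_iff]
  constructor <;> rintro ⟨h₁, h₂⟩ <;> constructor <;> linarith

theorem volume_lens (r d : ℝ) : volume (lens r d) = ∫⁻ x, ENNReal.ofReal (lensWidth r d x) := by
  have hmeas : MeasurableSet (lens r d) := by
    unfold lens; measurability
  rw [Measure.volume_eq_prod, Measure.prod_apply hmeas]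
  simp only [preimage_mk_lens, volume_setOf_sq_le, lensWidth]

theorem EuclideanSpace.mem_closedBall_fin_two_iff {x c : EuclideanSpace ℝ (Fin 2)} {r : ℝ}
    (hr : 0 ≤ r) : x ∈ closedBall c r ↔ (x 0 - c 0) ^ 2 + (x 1 - c 1) ^ 2 ≤ r ^ 2 := by
  rw [mem_closedBall, EuclideanSpace.dist_eq, Fin.sum_univ_two, sqrt_le_left hr]
  simp [Real.dist_eq, sq_abs]

theorem volume_closedBall_zero_inter_closedBall_single {r : ℝ} (hr : 0 ≤ r) (d : ℝ) :
    volume (closedBall (0 : EuclideanSpace ℝ (Fin 2)) r ∩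
        closedBall (EuclideanSpace.single 0 d) r) = volume (lens r d) := by
  let coords : EuclideanSpace ℝ (Fin 2) → ℝ × ℝ := fun x => (x 0, x 1)
  have hcoords : MeasurePreserving coords :=
    (volume_preserving_finTwoArrow ℝ).comp (PiLp.volume_preserving_ofLp (Fin 2))
  have hpre : closedBall (0 : EuclideanSpace ℝ (Fin 2)) r ∩
      closedBall (EuclideanSpace.single 0 d) r = coords ⁻¹' lens r d := by
    ext x
    simp [EuclideanSpace.mem_closedBall_fin_two_iff hr, coords, lens]
  rw [hpre, hcoords.measure_preimage (by unfold lens; measurability)]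

theorem volume_inter_closedBall_eq_of_dist_eq {E : Type*} [NormedAddCommGroup E]
    [InnerProductSpace ℝ E] [FiniteDimensional ℝ E] [MeasurableSpace E] [BorelSpace E]
    {c₁ c₂ c₁' c₂' : E} (h : dist c₁ c₂ = dist c₁' c₂') (r₁ r₂ : ℝ) :
    volume (closedBall c₁ r₁ ∩ closedBall c₂ r₂) =
      volume (closedBall c₁' r₁ ∩ closedBall c₂' r₂) := by
  have hnorm : ‖c₂ - c₁‖ = ‖c₂' - c₁'‖ := by
    rw [← dist_eq_norm, ← dist_eq_norm, dist_comm, h, dist_comm]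
  let L := Submodule.reflection (ℝ ∙ ((c₂ - c₁) - (c₂' - c₁')))ᗮ
  have hL : L (c₂ - c₁) = c₂' - c₁' := Submodule.reflection_sub hnorm
  let φ : E → E := fun x => L (x - c₁) + c₁'
  have hφ : MeasurePreserving φ :=
    (measurePreserving_add_right volume c₁').comp
      (L.measurePreserving.comp (measurePreserving_sub_right volume c₁))
  have hφ_dist : ∀ x y, dist (φ x) (φ y) = dist x y := fun x y => by
    rw [dist_add_right, L.dist_map, dist_sub_right]
  have hφ₁ : φ c₁ = c₁' := by simp [φ]
  have hφ₂ : φ c₂ = c₂' := by simp only [φ, hL, sub_add_cancel]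
  have hpre : φ ⁻¹' (closedBall c₁' r₁ ∩ closedBall c₂' r₂) =
      closedBall c₁ r₁ ∩ closedBall c₂ r₂ := by
    ext x
    simp only [mem_inter_iff, mem_preimage, mem_closedBall, ← hφ₁, ← hφ₂, hφ_dist]
  rw [← hpre,
    hφ.measure_preimage (measurableSet_closedBall.inter measurableSet_closedBall).nullMeasurableSet]

/-- The area (two-dimensional Lebesgue measure) of the intersection of two closed balls of
radius `r` in the Euclidean plane whose centers are at distance `d`, with `0 ≤ d ≤ 2r`,
equals `2r²·arccos(d/(2r)) − (d/2)·√(4r² − d²)`. -/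
theorem volume_inter_closedBall_eq_lens_area
    (r d : ℝ) (hr : 0 < r) (hd0 : 0 ≤ d) (hd : d ≤ 2 * r)
    (c₁ c₂ : EuclideanSpace ℝ (Fin 2)) (hdist : dist c₁ c₂ = d) :
    (volume (closedBall c₁ r ∩ closedBall c₂ r)).toReal =
      2 * r ^ 2 * Real.arccos (d / (2 * r)) - (d / 2) * Real.sqrt (4 * r ^ 2 - d ^ 2) := by
  have hdist' : dist c₁ c₂ = dist 0 (EuclideanSpace.single (0 : Fin 2) d) := by
    simp [hdist, abs_of_nonneg hd0]
  rw [volume_inter_closedBall_eq_of_dist_eq hdist',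
    volume_closedBall_zero_inter_closedBall_single hr.le, volume_lens,
    ← ofReal_integral_eq_lintegral_ofReal (integrable_lensWidth hr.le)
      (ae_of_all _ lensWidth_nonneg),
    ENNReal.toReal_ofReal (integral_nonneg lensWidth_nonneg), integral_lensWidth hr hd0 hd]
end

section
/- Let r > 0, l ≥ 1, and let c_1, ..., c_l ∈ ℝ² be any points such that ‖c_{i+1} − c_i‖ ≤ r for all i = 1, ..., l−1. Then the Lebesgue measure (area) of ⋃_{i=1}^{l} B(c_i, r) is at most l·π·r² − 2(l−1)·r²·(π/3 − √3/4). -/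
/-!
Each new disc `B(cᵢ₊₁, r)` overlaps the union of the previous ones at least in the lens
`B(cᵢ₊₁, r) ∩ B(cᵢ, r)`, so by inclusion–exclusion it adds at most `πr²` minus the area of that
lens. Since the two centres are at distance at most `r`, the lens contains a lens of two discs
whose centres are exactly `r` apart (a disc centred on the segment between two centres contains
the intersection of their discs), and such a lens consists of two circular segments of angle
`2π/3`, of total area `2(π/3 - √3/4)r²`.
-/

open MeasureTheory Metric Real Set

theorem closedBall_inter_closedBall_subset_closedBall_of_mem_segment {E : Type*}
    [SeminormedAddCommGroup E] [NormedSpace ℝ E] {p q w : E} {r : ℝ}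
    (hq : q ∈ segment ℝ p w) : closedBall p r ∩ closedBall w r ⊆ closedBall q r := by
  rintro x ⟨hp, hw⟩
  rw [mem_closedBall_comm] at hp hw ⊢
  exact (convex_closedBall x r).segment_subset hp hw hq

theorem exists_dist_eq_and_mem_segment {E : Type*} [NormedAddCommGroup E] [NormedSpace ℝ E]
    [Nontrivial E] {p q : E} {r : ℝ} (hr : 0 < r) (hpq : dist p q ≤ r) :
    ∃ w, dist p w = r ∧ q ∈ segment ℝ p w := by
  obtain ⟨u, hu, hqu⟩ : ∃ u : E, ‖u‖ = 1 ∧ q = p + dist p q • u := by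
    rcases eq_or_ne q p with rfl | hne
    · obtain ⟨u, hu⟩ := exists_norm_eq E zero_le_one
      exact ⟨u, hu, by simp⟩
    · refine ⟨‖q - p‖⁻¹ • (q - p), norm_smul_inv_norm (sub_ne_zero.2 hne), ?_⟩
      rw [dist_comm, dist_eq_norm, smul_inv_smul₀ (norm_ne_zero_iff.2 (sub_ne_zero.2 hne))]
      abel
  refine ⟨p + r • u, by simp [norm_smul, hu, hr.le], ?_⟩
  rw [segment_eq_image']
  refine ⟨dist p q / r, ⟨by positivity, (div_le_one hr).2 hpq⟩, ?_⟩
  dsimp only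
  rw [add_sub_cancel_left, smul_smul, div_mul_cancel₀ _ hr.ne', ← hqu]

theorem volume_closedBall_inter_closedBall_eq_of_dist_eq {E : Type*} [NormedAddCommGroup E]
    [InnerProductSpace ℝ E] [FiniteDimensional ℝ E] [MeasurableSpace E] [BorelSpace E]
    {p q p' q' : E} (h : dist p q = dist p' q') (r s : ℝ) :
    volume (closedBall p r ∩ closedBall q s) = volume (closedBall p' r ∩ closedBall q' s) := by
  -- the reflection in the perpendicular bisector of `q - p` and `q' - p'` swaps them
  set R := Submodule.reflection (ℝ ∙ ((q - p) - (q' - p')))ᗮ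
  have hR : R (q - p) = q' - p' := by
    apply Submodule.reflection_sub
    rwa [← dist_eq_norm', ← dist_eq_norm']
  set f : E → E := fun x => R (x - p) + p'
  have hf : MeasurePreserving f :=
    (measurePreserving_add_right volume p').comp
      (R.measurePreserving.comp (measurePreserving_sub_right volume p))
  have hdist : ∀ x y, dist (f x) (f y) = dist x y := fun x y => by
    simp only [f, dist_add_right, LinearIsometryEquiv.dist_map, dist_sub_right]
  have hfp : f p = p' := by simp [f]
  have hfq : f q = q' := by simp only [f, hR, sub_add_cancel]
  have hpre : f ⁻¹' (closedBall p' r ∩ closedBall q' s) = closedBall p r ∩ closedBall q s := by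
    ext x
    simp only [mem_inter_iff, mem_preimage, mem_closedBall, ← hfp, ← hfq, hdist]
  rw [← hpre, hf.measure_preimage
    (measurableSet_closedBall.inter measurableSet_closedBall).nullMeasurableSet]

theorem measureReal_biUnion_Icc_le {α : Type*} [MeasurableSpace α] {μ : Measure α}
    {s : ℕ → Set α} (hs : ∀ i, MeasurableSet (s i)) (hfin : ∀ i, μ (s i) ≠ ⊤) {A L : ℝ}
    (hA : ∀ i, μ.real (s i) ≤ A) (n : ℕ)
    (hL : ∀ i ∈ Finset.Icc 1 n, L ≤ μ.real (s (i + 1) ∩ s i)) :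
    μ.real (⋃ i ∈ Finset.Icc 1 (n + 1), s i) ≤ (n + 1) * A - n * L := by
  induction n with
  | zero => simpa using hA 1
  | succ n ih =>
    set U := ⋃ i ∈ Finset.Icc 1 (n + 1), s i
    have hU : μ U ≠ ⊤ :=
      (measure_biUnion_lt_top (Finset.finite_toSet _) fun i _ => (hfin i).lt_top).ne
    have hunion : ⋃ i ∈ Finset.Icc 1 (n + 1 + 1), s i = s (n + 1 + 1) ∪ U := by
      rw [← Finset.insert_Icc_right_eq_Icc_add_one (by omega), Finset.set_biUnion_insert]
    have hinter : L ≤ μ.real (s (n + 1 + 1) ∩ U) :=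
      (hL (n + 1) (by simp)).trans (measureReal_mono
        (inter_subset_inter_right _ (Finset.subset_set_biUnion_of_mem (by simp)))
        (measure_ne_top_of_subset inter_subset_left (hfin _)))
    have hincl_excl := measureReal_union_add_inter' (hs (n + 1 + 1)) (hfin _) hU
    have hU_le := ih fun i hi => hL i (Finset.Icc_subset_Icc_right (by omega) hi)
    rw [hunion]
    push_cast
    linarith [hA (n + 1 + 1)]

theorem integral_sqrt_sq_sub_sq_half_to_self {r : ℝ} (hr : 0 ≤ r) :
    ∫ x in (r / 2)..r, √(r ^ 2 - x ^ 2) = (π / 6 - √3 / 8) * r ^ 2 := by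
  have hπ : π / 6 ≤ π / 2 := by linarith [pi_pos]
  calc ∫ x in (r / 2)..r, √(r ^ 2 - x ^ 2)
      = ∫ x in (r * sin (π / 6))..(r * sin (π / 2)), √(r ^ 2 - x ^ 2) := by
        rw [sin_pi_div_six, sin_pi_div_two, mul_one, mul_one_div]
    _ = ∫ t in (π / 6)..(π / 2), √(r ^ 2 - (r * sin t) ^ 2) * (r * cos t) :=
        (intervalIntegral.integral_comp_mul_deriv (fun t _ => (hasDerivAt_sin t).const_mul r)
          (continuous_const.mul continuous_cos).continuousOn (by fun_prop)).symm
    _ = ∫ t in (π / 6)..(π / 2), r ^ 2 * cos t ^ 2 := by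
        refine intervalIntegral.integral_congr fun t ht => ?_
        rw [uIcc_of_le hπ] at ht
        have hcos : 0 ≤ cos t := cos_nonneg_of_mem_Icc ⟨by linarith [pi_pos, ht.1], ht.2⟩
        rw [show r ^ 2 - (r * sin t) ^ 2 = (r * cos t) ^ 2 by
            linear_combination -r ^ 2 * sin_sq_add_cos_sq t,
          sqrt_sq (mul_nonneg hr hcos)]
        ring
    _ = (π / 6 - √3 / 8) * r ^ 2 := by
        rw [intervalIntegral.integral_const_mul, integral_cos_sq, cos_pi_div_two, sin_pi_div_six,
          cos_pi_div_six]
        ring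

theorem integral_min_sqrt_sq_sub_sq {r : ℝ} (hr : 0 ≤ r) :
    ∫ x in (0 : ℝ)..r, min √(r ^ 2 - x ^ 2) √(r ^ 2 - (r - x) ^ 2) = (π / 3 - √3 / 4) * r ^ 2 := by
  set g : ℝ → ℝ := fun x => √(r ^ 2 - x ^ 2)
  have hmin : Continuous fun x => min (g x) (g (r - x)) := by fun_prop
  have h_left : EqOn (fun x => min (g x) (g (r - x))) (fun x => g (r - x)) (uIcc 0 (r / 2)) := by
    intro x hx
    rw [uIcc_of_le (by linarith)] at hx
    exact min_eq_right (sqrt_le_sqrt (by nlinarith [hx.1, hx.2]))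
  have h_right : EqOn (fun x => min (g x) (g (r - x))) g (uIcc (r / 2) r) := by
    intro x hx
    rw [uIcc_of_le (by linarith)] at hx
    exact min_eq_left (sqrt_le_sqrt (by nlinarith [hx.1, hx.2]))
  rw [← intervalIntegral.integral_add_adjacent_intervals (b := r / 2) (hmin.intervalIntegrable _ _)
      (hmin.intervalIntegrable _ _), intervalIntegral.integral_congr h_left,
    intervalIntegral.integral_congr h_right, intervalIntegral.integral_comp_sub_left g r,
    sub_zero, sub_half, integral_sqrt_sq_sub_sq_half_to_self hr]
  ring

theorem ofReal_le_volume_closedBall_inter_closedBall_single {r : ℝ} (hr : 0 ≤ r) :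
    ENNReal.ofReal (2 * (π / 3 - √3 / 4) * r ^ 2) ≤ volume
      (closedBall (0 : EuclideanSpace ℝ (Fin 2)) r ∩ closedBall (EuclideanSpace.single 0 r) r) := by
  -- `h x` is the half-height of the lens above the abscissa `x`
  set h : ℝ → ℝ := fun x => min √(r ^ 2 - x ^ 2) √(r ^ 2 - (r - x) ^ 2)
  have hh : Continuous h := by fun_prop
  set e : EuclideanSpace ℝ (Fin 2) → ℝ × ℝ := fun x => (x 0, x 1)
  have he : MeasurePreserving e :=
    (volume_preserving_finTwoArrow ℝ).comp (PiLp.volume_preserving_ofLp (Fin 2))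
  have hsub : e ⁻¹' regionBetween (-h) h (Ioc 0 r) ⊆
      closedBall 0 r ∩ closedBall (EuclideanSpace.single 0 r) r := by
    rintro x ⟨hx0, hx1⟩
    replace hx1 : |x 1| < h (x 0) := abs_lt.mpr hx1
    rw [lt_min_iff, lt_sqrt (abs_nonneg _), lt_sqrt (abs_nonneg _), sq_abs] at hx1
    simp only [mem_inter_iff, mem_closedBall, EuclideanSpace.dist_eq, Fin.sum_univ_two,
      sqrt_le_left hr, PiLp.single_apply, Real.dist_eq, sq_abs]
    simp only [Fin.isValue, mem_Ioc, PiLp.zero_apply, sub_zero, ↓reduceIte, one_ne_zero, e]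
      at hx0 hx1 ⊢
    constructor <;> nlinarith
  calc ENNReal.ofReal (2 * (π / 3 - √3 / 4) * r ^ 2)
      = volume (regionBetween (-h) h (Ioc 0 r)) := by
        rw [Measure.volume_eq_prod, volume_regionBetween_eq_integral hh.neg.integrableOn_Ioc
          hh.integrableOn_Ioc measurableSet_Ioc
          fun x _ => neg_le_self (le_min (sqrt_nonneg _) (sqrt_nonneg _)),
          ← intervalIntegral.integral_of_le hr, sub_neg_eq_add, ← two_smul ℝ h]
        simp only [Pi.smul_apply, smul_eq_mul]
        rw [intervalIntegral.integral_const_mul, integral_min_sqrt_sq_sub_sq hr, mul_assoc]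
    _ = volume (e ⁻¹' regionBetween (-h) h (Ioc 0 r)) :=
        (he.measure_preimage (measurableSet_regionBetween hh.neg.measurable hh.measurable
          measurableSet_Ioc).nullMeasurableSet).symm
    _ ≤ _ := measure_mono hsub

theorem le_measureReal_closedBall_inter_closedBall_of_dist_le {p q : EuclideanSpace ℝ (Fin 2)}
    {r : ℝ} (hr : 0 < r) (hpq : dist p q ≤ r) :
    2 * (π / 3 - √3 / 4) * r ^ 2 ≤ volume.real (closedBall p r ∩ closedBall q r) := by
  obtain ⟨w, hpw, hq⟩ := exists_dist_eq_and_mem_segment hr hpq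
  have hstd : dist 0 (EuclideanSpace.single 0 r : EuclideanSpace ℝ (Fin 2)) = r := by
    simp [hr.le]
  refine (ENNReal.ofReal_le_iff_le_toReal
    (measure_ne_top_of_subset inter_subset_left measure_closedBall_lt_top.ne)).1 ?_
  calc ENNReal.ofReal (2 * (π / 3 - √3 / 4) * r ^ 2)
      ≤ volume (closedBall 0 r ∩ closedBall (EuclideanSpace.single 0 r) r) :=
        ofReal_le_volume_closedBall_inter_closedBall_single hr.le
    _ = volume (closedBall p r ∩ closedBall w r) :=
        volume_closedBall_inter_closedBall_eq_of_dist_eq (hstd.trans hpw.symm) r r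
    _ ≤ volume (closedBall p r ∩ closedBall q r) := measure_mono <| subset_inter inter_subset_left
        (closedBall_inter_closedBall_subset_closedBall_of_mem_segment hq)

theorem measureReal_closedBall_fin_two (x : EuclideanSpace ℝ (Fin 2)) {r : ℝ} (hr : 0 ≤ r) :
    volume.real (closedBall x r) = π * r ^ 2 := by
  simp [measureReal_def, hr, pi_pos.le, mul_comm]

/-- Worst-case bound: if `c₁, …, c_l` are points of the Euclidean plane with consecutive
points at distance at most `r`, then the area of the union of the closed balls `B(cᵢ, r)`
is at most `l·π·r² − 2(l−1)·r²·(π/3 − √3/4)`. -/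
theorem volume_union_closedBalls_le_worst_case
    (r : ℝ) (hr : 0 < r) (l : ℕ) (hl : 1 ≤ l)
    (c : ℕ → EuclideanSpace ℝ (Fin 2))
    (hc : ∀ i ∈ Finset.Icc 1 (l - 1), dist (c (i + 1)) (c i) ≤ r) :
    (volume (⋃ i ∈ Finset.Icc 1 l, closedBall (c i) r)).toReal ≤
      (l : ℝ) * π * r ^ 2 - 2 * ((l : ℝ) - 1) * r ^ 2 * (π / 3 - Real.sqrt 3 / 4) := by
  obtain ⟨n, rfl⟩ : ∃ n, l = n + 1 := ⟨l - 1, by omega⟩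
  have hlens : ∀ i ∈ Finset.Icc 1 n, 2 * (π / 3 - √3 / 4) * r ^ 2 ≤
      volume.real (closedBall (c (i + 1)) r ∩ closedBall (c i) r) := fun i hi =>
    le_measureReal_closedBall_inter_closedBall_of_dist_le hr (hc i (by simpa using hi))
  calc volume.real (⋃ i ∈ Finset.Icc 1 (n + 1), closedBall (c i) r)
      ≤ (n + 1) * (π * r ^ 2) - n * (2 * (π / 3 - √3 / 4) * r ^ 2) :=
        measureReal_biUnion_Icc_le (fun _ => measurableSet_closedBall)
          (fun _ => measure_closedBall_lt_top.ne)
          (fun i => (measureReal_closedBall_fin_two (c i) hr.le).le) n hlens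
    _ = _ := by push_cast; ring
end

section
/- Let r > 0, l ≥ 1, let c_1, ..., c_l ∈ ℝ² satisfy ‖c_{i+1} − c_i‖ ≤ r for all i = 1, ..., l−1, let Ω ⊆ ℝ² be a measurable set of finite positive area S containing all the balls B(c_i, r), and let E be a random point distributed uniformly on Ω. Then the probability that E lies within distance r of at least one of the points c_1, ..., c_l is at most (l·π·r² − 2(l−1)·r²·(π/3 − √3/4)) / S, which in turn is at most r²·(1.92·l + 1.23)/S. -/
/-!
Each disc has area `π r²`, and two discs of radius `r` whose centres are at most `r` apart
overlap in a lens of area at least `(2π/3 - √3/2) r²`, so inclusion–exclusion along the route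
bounds the area of the union of the `l` discs by `l π r² - (l - 1)(2π/3 - √3/2) r²`; since the
union lies in `Ω`, dividing by `S` bounds the probability.

The lens area depends only on the distance of the centres (translations and reflections preserve
volume) and decreases with it (a disc containing `a` and `b'` contains the segment `[a, b']`), so
it suffices to compute it for centres at distance exactly `r`: there the lens is the region
between `r - √(r² - x²)` and `√(r² - x²)` over `|x| < (√3/2) r`, integrated by `x = r sin θ`.
The numerical bound only needs `π < 3.1416` and `1.73 < √3 < 1.74`.
-/

open MeasureTheory Metric Real

theorem MeasureTheory.MeasurePreserving.measure_closedBall_inter_closedBall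
    {X : Type*} [PseudoMetricSpace X] [MeasurableSpace X] [OpensMeasurableSpace X]
    {μ : Measure X} (f : X ≃ᵢ X) (hf : MeasurePreserving f μ μ) (a b : X) (r : ℝ) :
    μ (closedBall (f a) r ∩ closedBall (f b) r) = μ (closedBall a r ∩ closedBall b r) := by
  rw [← hf.measure_preimage
      (measurableSet_closedBall.inter measurableSet_closedBall).nullMeasurableSet,
    Set.preimage_inter, f.preimage_closedBall, f.preimage_closedBall, f.symm_apply_apply,
    f.symm_apply_apply]

section Lens

variable {E : Type*} [NormedAddCommGroup E] [InnerProductSpace ℝ E] [FiniteDimensional ℝ E]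
  [MeasurableSpace E] [BorelSpace E]

theorem volume_closedBall_inter_closedBall_congr_dist {a b a' b' : E} (r : ℝ)
    (h : dist a b = dist a' b') :
    volume (closedBall a r ∩ closedBall b r) = volume (closedBall a' r ∩ closedBall b' r) := by
  have translate (a b : E) : volume (closedBall a r ∩ closedBall b r) =
      volume (closedBall 0 r ∩ closedBall (b - a) r) := by
    simpa using (measurePreserving_add_left volume a).measure_closedBall_inter_closedBall
      (IsometryEquiv.addLeft a) 0 (b - a) r
  have hnorm : ‖b - a‖ = ‖b' - a'‖ := by rwa [← dist_eq_norm', ← dist_eq_norm']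
  set ρ := Submodule.reflection (ℝ ∙ (b - a - (b' - a')))ᗮ
  rw [translate a b, translate a' b', ← Submodule.reflection_sub hnorm]
  conv_rhs => rw [← map_zero ρ]
  exact (ρ.measurePreserving.measure_closedBall_inter_closedBall ρ.toIsometryEquiv 0 (b - a)
    r).symm

theorem volume_closedBall_inter_closedBall_le_of_dist_le {a b a' b' : E} (r : ℝ)
    (h : dist a b ≤ dist a' b') :
    volume (closedBall a' r ∩ closedBall b' r) ≤ volume (closedBall a r ∩ closedBall b r) := by
  -- if `a' = b'` then `t = 0` by the convention `x / 0 = 0`, and `a = b` as well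
  set t := dist a b / dist a' b'
  have ht : t ∈ Set.Icc 0 1 := ⟨by positivity, div_le_one_of_le₀ h dist_nonneg⟩
  have hdist : dist a b = dist a' (AffineMap.lineMap a' b' t) := by
    rw [dist_left_lineMap, Real.norm_of_nonneg ht.1, div_mul_cancel_of_imp]
    intro h0
    exact le_antisymm (h0 ▸ h) dist_nonneg
  rw [volume_closedBall_inter_closedBall_congr_dist r hdist]
  refine measure_mono fun x ⟨hxa, hxb⟩ => ⟨hxa, ?_⟩
  rw [mem_closedBall_comm] at hxa hxb ⊢
  exact (convex_closedBall x r).lineMap_mem hxa hxb ht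

end Lens

theorem integral_sqrt_sq_sub_sq_neg_mul_sin {r θ : ℝ} (hr : 0 ≤ r) (hθ : θ ∈ Set.Icc 0 (π / 2)) :
    ∫ x in -(r * sin θ)..r * sin θ, √(r ^ 2 - x ^ 2) = r ^ 2 * (θ + sin θ * cos θ) := by
  have hsubst := intervalIntegral.integral_comp_mul_deriv (a := -θ) (b := θ)
    (f := fun t => r * sin t) (f' := fun t => r * cos t) (g := fun x => √(r ^ 2 - x ^ 2))
    (fun t _ => (hasDerivAt_sin t).const_mul r) (by fun_prop) (by fun_prop)
  simp only [sin_neg, mul_neg] at hsubst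
  rw [← hsubst]
  calc ∫ t in -θ..θ, √(r ^ 2 - (r * sin t) ^ 2) * (r * cos t)
      = ∫ t in -θ..θ, r ^ 2 * cos t ^ 2 := by
        refine intervalIntegral.integral_congr fun t ht => ?_
        rw [Set.uIcc_of_le (by linarith [hθ.1])] at ht
        have hcos : 0 ≤ cos t :=
          cos_nonneg_of_mem_Icc ⟨by linarith [ht.1, hθ.2], by linarith [ht.2, hθ.2]⟩
        have : r ^ 2 - (r * sin t) ^ 2 = (r * cos t) ^ 2 := by
          linear_combination (-r ^ 2) * sin_sq_add_cos_sq t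
        simp only [this, sqrt_sq (mul_nonneg hr hcos)]
        ring
    _ = r ^ 2 * (θ + sin θ * cos θ) := by
        rw [intervalIntegral.integral_const_mul, integral_cos_sq, cos_neg, sin_neg]
        ring

theorem EuclideanSpace.dist_le_iff_fin_two {x y : EuclideanSpace ℝ (Fin 2)} {r : ℝ} (hr : 0 ≤ r) :
    dist x y ≤ r ↔ (x 0 - y 0) ^ 2 + (x 1 - y 1) ^ 2 ≤ r ^ 2 := by
  rw [EuclideanSpace.dist_eq, Fin.sum_univ_two, sqrt_le_iff, Real.dist_eq, Real.dist_eq, sq_abs,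
    sq_abs]
  exact and_iff_right hr

def lensRegion (r : ℝ) : Set (ℝ × ℝ) :=
  regionBetween (fun x => r - √(r ^ 2 - x ^ 2)) (fun x => √(r ^ 2 - x ^ 2))
    (Set.Ioo (-(√3 / 2 * r)) (√3 / 2 * r))

theorem four_mul_sq_le_three_mul_sq_of_mem_Ioo {r x : ℝ} (hx : x ∈ Set.Ioo (-(√3 / 2 * r)) (√3 / 2 * r)) :
    4 * x ^ 2 ≤ 3 * r ^ 2 := by
  nlinarith [hx.1, hx.2, sqrt_nonneg 3, sq_sqrt (show (0 : ℝ) ≤ 3 by norm_num)]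

theorem volume_lensRegion {r : ℝ} (hr : 0 ≤ r) :
    volume (lensRegion r) = ENNReal.ofReal ((2 * π / 3 - √3 / 2) * r ^ 2) := by
  have hhalf : √3 / 2 * r = r * sin (π / 3) := by rw [sin_pi_div_three]; ring
  have hlens :
      ∫ x in -(√3 / 2 * r)..√3 / 2 * r, √(r ^ 2 - x ^ 2) = r ^ 2 * (π / 3 + √3 / 4) := by
    rw [hhalf, integral_sqrt_sq_sub_sq_neg_mul_sin hr ⟨by positivity, by linarith [pi_pos]⟩,
      sin_pi_div_three, cos_pi_div_three]
    ring
  have hlu : ∀ x ∈ Set.Ioo (-(√3 / 2 * r)) (√3 / 2 * r),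
      r - √(r ^ 2 - x ^ 2) ≤ √(r ^ 2 - x ^ 2) := fun x hx => by
    have : r / 2 ≤ √(r ^ 2 - x ^ 2) :=
      le_sqrt_of_sq_le (by nlinarith [four_mul_sq_le_three_mul_sq_of_mem_Ioo hx])
    linarith
  rw [lensRegion, Measure.volume_eq_prod, volume_regionBetween_eq_integral
    ((by fun_prop : Continuous _).integrableOn_Icc.mono_set Set.Ioo_subset_Icc_self)
    ((by fun_prop : Continuous _).integrableOn_Icc.mono_set Set.Ioo_subset_Icc_self)
    measurableSet_Ioo hlu, ← integral_Ioc_eq_integral_Ioo,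
    ← intervalIntegral.integral_of_le (neg_le_self (by positivity))]
  simp only [Pi.sub_apply, sub_sub_eq_add_sub, ← two_mul]
  rw [intervalIntegral.integral_sub
    ((by fun_prop : Continuous fun x => 2 * √(r ^ 2 - x ^ 2)).intervalIntegrable _ _)
    intervalIntegrable_const, intervalIntegral.integral_const_mul, hlens,
    intervalIntegral.integral_const, smul_eq_mul]
  ring_nf

theorem lensRegion_subset (r : ℝ) (hr : 0 ≤ r) :
    lensRegion r ⊆ {p | p.1 ^ 2 + p.2 ^ 2 ≤ r ^ 2 ∧ p.1 ^ 2 + (p.2 - r) ^ 2 ≤ r ^ 2} := by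
  rintro ⟨x, y⟩ ⟨hx, hy⟩
  have hx2 := four_mul_sq_le_three_mul_sq_of_mem_Ioo hx
  have hsq := sq_sqrt (show 0 ≤ r ^ 2 - x ^ 2 by nlinarith)
  constructor <;> nlinarith [hy.1, hy.2, sqrt_nonneg (r ^ 2 - x ^ 2)]

theorem ofReal_le_volume_lens_fin_two {r : ℝ} (hr : 0 ≤ r) :
    ENNReal.ofReal ((2 * π / 3 - √3 / 2) * r ^ 2) ≤
      volume (closedBall (0 : EuclideanSpace ℝ (Fin 2)) r ∩
        closedBall (EuclideanSpace.single 1 r) r) := by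
  have hcoord := (volume_preserving_finTwoArrow ℝ).comp (PiLp.volume_preserving_ofLp (Fin 2))
  have hmeas : MeasurableSet (lensRegion r) :=
    measurableSet_regionBetween (by fun_prop) (by fun_prop) measurableSet_Ioo
  rw [← volume_lensRegion hr, ← hcoord.measure_preimage hmeas.nullMeasurableSet]
  refine measure_mono fun p hp => ?_
  obtain ⟨h0, h1⟩ := lensRegion_subset r hr hp
  simp only [Set.mem_inter_iff, mem_closedBall, EuclideanSpace.dist_le_iff_fin_two hr]
  simpa using And.intro h0 h1

open scoped ENNReal in
theorem measure_biUnion_range_add_nsmul_le_sum {α : Type*} [MeasurableSpace α] (μ : Measure α)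
    {B : ℕ → Set α} (hB : ∀ i, MeasurableSet (B i)) {L : ℝ≥0∞} (n : ℕ)
    (hL : ∀ i < n, L ≤ μ (B i ∩ B (i + 1))) :
    μ (⋃ i ∈ Finset.range (n + 1), B i) + n • L ≤ ∑ i ∈ Finset.range (n + 1), μ (B i) := by
  induction n with
  | zero => simp
  | succ n ih =>
    set U := ⋃ i ∈ Finset.range (n + 1), B i
    have hoverlap : L ≤ μ (U ∩ B (n + 1)) :=
      (hL n n.lt_succ_self).trans <| measure_mono <| Set.inter_subset_inter_left _ <|
        Set.subset_biUnion_of_mem (u := B) (Finset.mem_range.2 n.lt_succ_self)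
    calc μ (⋃ i ∈ Finset.range (n + 2), B i) + (n + 1) • L
        = μ (U ∪ B (n + 1)) + L + n • L := by
          rw [Finset.range_add_one, Finset.set_biUnion_insert, Set.union_comm, succ_nsmul]; ring
      _ ≤ μ (U ∪ B (n + 1)) + μ (U ∩ B (n + 1)) + n • L := by gcongr
      _ = (μ U + n • L) + μ (B (n + 1)) := by
          rw [measure_union_add_inter U (hB (n + 1))]; ring
      _ ≤ ∑ i ∈ Finset.range (n + 2), μ (B i) := by
          rw [Finset.sum_range_succ _ (n + 1)]
          exact add_le_add_left (ih fun i hi => hL i (by omega)) _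

theorem route_area_le_numeric (l r : ℝ) (hl : 0 ≤ l) :
    l * π * r ^ 2 - 2 * (l - 1) * r ^ 2 * (π / 3 - √3 / 4) ≤ r ^ 2 * (1.92 * l + 1.23) := by
  have hπ := pi_lt_d4
  have hlo : (1.73 : ℝ) < √3 := lt_sqrt_of_sq_lt (by norm_num)
  have hhi : √3 < 1.74 := (sqrt_lt' (by norm_num)).2 (by norm_num)
  have hslope : π / 3 + √3 / 2 ≤ 1.92 := by linarith
  have hconst : 2 * π / 3 - √3 / 2 ≤ 1.23 := by linarith
  have key : l * π - 2 * (l - 1) * (π / 3 - √3 / 4) ≤ 1.92 * l + 1.23 := by nlinarith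
  nlinarith [sq_nonneg r]

theorem ofReal_le_volume_closedBall_inter_closedBall_fin_two {a b : EuclideanSpace ℝ (Fin 2)}
    {r : ℝ} (hr : 0 ≤ r) (hab : dist a b ≤ r) :
    ENNReal.ofReal ((2 * π / 3 - √3 / 2) * r ^ 2) ≤ volume (closedBall a r ∩ closedBall b r) :=
  (ofReal_le_volume_lens_fin_two hr).trans <|
    volume_closedBall_inter_closedBall_le_of_dist_le r <| by simpa [abs_of_nonneg hr] using hab

theorem toReal_volume_biUnion_closedBall_le_of_dist_le {r : ℝ} (hr : 0 ≤ r) (n : ℕ)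
    (c : ℕ → EuclideanSpace ℝ (Fin 2)) (hc : ∀ i < n, dist (c i) (c (i + 1)) ≤ r) :
    (volume (⋃ i ∈ Finset.range (n + 1), closedBall (c i) r)).toReal ≤
      (n + 1) * (π * r ^ 2) - n * ((2 * π / 3 - √3 / 2) * r ^ 2) := by
  have hlens : 0 ≤ (2 * π / 3 - √3 / 2) * r ^ 2 := by
    have : √3 < 2 := (sqrt_lt' two_pos).2 (by norm_num)
    nlinarith [pi_gt_three, sq_nonneg r]
  have hchain := measure_biUnion_range_add_nsmul_le_sum volume
    (fun i => measurableSet_closedBall) n fun i hi =>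
      ofReal_le_volume_closedBall_inter_closedBall_fin_two hr (hc i hi)
  simp only [EuclideanSpace.volume_closedBall_fin_two, Finset.sum_const, Finset.card_range,
    ← ENNReal.ofReal_pow hr, ← ENNReal.ofReal_mul (sq_nonneg r), ← ENNReal.ofReal_nsmul] at hchain
  have hfin : volume (⋃ i ∈ Finset.range (n + 1), closedBall (c i) r) ≠ ⊤ :=
    ne_top_of_le_ne_top ENNReal.ofReal_ne_top (le_self_add.trans hchain)
  have := ENNReal.toReal_mono ENNReal.ofReal_ne_top hchain
  rw [ENNReal.toReal_add hfin ENNReal.ofReal_ne_top, ENNReal.toReal_ofReal (by positivity),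
    ENNReal.toReal_ofReal (by positivity)] at this
  simp only [nsmul_eq_mul, Nat.cast_add, Nat.cast_one] at this
  linarith

theorem prob_eavesdropper_overhears_route_le_general
    (r : ℝ) (hr : 0 < r) (l : ℕ) (hl : 1 ≤ l)
    (c : ℕ → EuclideanSpace ℝ (Fin 2))
    (hc : ∀ i ∈ Finset.Icc 1 (l - 1), dist (c (i + 1)) (c i) ≤ r)
    (Ω : Set (EuclideanSpace ℝ (Fin 2)))
    (S : ℝ) (hS : (volume Ω).toReal = S)
    (hsub : ∀ i ∈ Finset.Icc 1 l, closedBall (c i) r ⊆ Ω)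
    (μ : Measure (EuclideanSpace ℝ (Fin 2)))
    (hμ : μ = (volume Ω)⁻¹ • volume.restrict Ω) :
    (μ {p | ∃ i ∈ Finset.Icc 1 l, dist p (c i) ≤ r}).toReal ≤
        ((l : ℝ) * π * r ^ 2 - 2 * ((l : ℝ) - 1) * r ^ 2 * (π / 3 - Real.sqrt 3 / 4)) / S ∧
      ((l : ℝ) * π * r ^ 2 - 2 * ((l : ℝ) - 1) * r ^ 2 * (π / 3 - Real.sqrt 3 / 4)) / S ≤
        r ^ 2 * (1.92 * (l : ℝ) + 1.23) / S := by
  obtain ⟨n, rfl⟩ : ∃ n, l = n + 1 := ⟨l - 1, by omega⟩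
  set T := {p | ∃ i ∈ Finset.Icc 1 (n + 1), dist p (c i) ≤ r}
  have hT : T = ⋃ i ∈ Finset.range (n + 1), closedBall (c (i + 1)) r := by
    ext p
    simp only [T, Set.mem_ofPred_eq, Set.mem_iUnion, Finset.mem_Icc, Finset.mem_range,
      mem_closedBall, exists_prop]
    constructor
    · rintro ⟨i, hi, hp⟩
      exact ⟨i - 1, by omega, by rwa [Nat.sub_add_cancel hi.1]⟩
    · rintro ⟨i, hi, hp⟩
      exact ⟨i + 1, by omega, hp⟩
  have hTΩ : T ⊆ Ω := fun p ⟨i, hi, hp⟩ => hsub i hi (mem_closedBall.2 hp)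
  have hTm : MeasurableSet T :=
    hT ▸ Finset.measurableSet_biUnion _ fun i _ => measurableSet_closedBall
  have hprob : (μ T).toReal = (volume T).toReal / S := by
    rw [hμ, Measure.smul_apply, Measure.restrict_apply hTm, Set.inter_eq_left.2 hTΩ, smul_eq_mul,
      ENNReal.toReal_mul, ENNReal.toReal_inv, hS, inv_mul_eq_div]
  have harea := toReal_volume_biUnion_closedBall_le_of_dist_le hr.le n (fun i => c (i + 1))
    fun i hi => by rw [dist_comm]; exact hc (i + 1) (Finset.mem_Icc.2 ⟨by omega, by omega⟩)
  have hS0 : 0 ≤ S := hS ▸ ENNReal.toReal_nonneg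
  refine ⟨hprob ▸ div_le_div_of_nonneg_right ?_ hS0,
    div_le_div_of_nonneg_right (route_area_le_numeric _ r (by positivity)) hS0⟩
  rw [hT]
  push_cast
  linarith

/-- Let `c 1, …, c l` be node positions in the plane with consecutive nodes within distance
`r` of each other, all of whose `r`-balls lie in a measurable region `Ω` of finite positive
area `S`, and let `E` be a point distributed uniformly on `Ω` (law
`μ = (volume Ω)⁻¹ • volume.restrict Ω`).  Then the probability that `E` lies within distance
`r` of some node is at most `(l·π·r² − 2(l−1)·r²·(π/3 − √3/4))/S`, which is at most
`r²·(1.92·l + 1.23)/S`. -/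
theorem prob_eavesdropper_overhears_route_le
    (r : ℝ) (hr : 0 < r) (l : ℕ) (hl : 1 ≤ l)
    (c : ℕ → EuclideanSpace ℝ (Fin 2))
    (hc : ∀ i ∈ Finset.Icc 1 (l - 1), dist (c (i + 1)) (c i) ≤ r)
    (Ω : Set (EuclideanSpace ℝ (Fin 2))) (hΩm : MeasurableSet Ω)
    (S : ℝ) (hS : (volume Ω).toReal = S) (hSpos : 0 < S) (hSfin : volume Ω ≠ ⊤)
    (hsub : ∀ i ∈ Finset.Icc 1 l, closedBall (c i) r ⊆ Ω)
    (μ : Measure (EuclideanSpace ℝ (Fin 2)))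
    (hμ : μ = (volume Ω)⁻¹ • volume.restrict Ω) :
    (μ {p | ∃ i ∈ Finset.Icc 1 l, dist p (c i) ≤ r}).toReal ≤
        ((l : ℝ) * π * r ^ 2 - 2 * ((l : ℝ) - 1) * r ^ 2 * (π / 3 - Real.sqrt 3 / 4)) / S ∧
      ((l : ℝ) * π * r ^ 2 - 2 * ((l : ℝ) - 1) * r ^ 2 * (π / 3 - Real.sqrt 3 / 4)) / S ≤
        r ^ 2 * (1.92 * (l : ℝ) + 1.23) / S :=
  prob_eavesdropper_overhears_route_le_general r hr l hl c hc Ω S hS hsub μ hμ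
end
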